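/- arXiv:math/9702214 — 8 statements merged into one kernel-verified Lean document; each statement's English description precedes it below -/
import Mathlib

section
/- Let X be a real Banach space and P : X → X a bounded linear projection (P² = P). Then P is numerically positive (i.e., for every x ∈ X with ‖x‖ = 1 there exists a norming functional x* with ‖x*‖ = 1, x*(x) = 1, and x*(Px) ≥ 0) if and only if ‖Id − P‖ ≤ 1. -/
/-!
If `‖Id − P‖ ≤ 1`, a norming functional `f` of a unit vector `x` satisfies
`f (P x) = 1 − f ((Id − P) x) ≥ 0`. Conversely, numerical positivity makes `P` accretive:
`‖x‖ ≤ ‖x + α P x‖` for `α ≥ 0`. For a projection, `z = y − c P y` with `0 ≤ c < 1` satisfies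
`z + c/(1 − c) · P z = y`, so `‖y − c P y‖ ≤ ‖y‖`, and letting `c → 1` gives `‖y − P y‖ ≤ ‖y‖`.
-/

open Filter Topology

section

variable {X : Type*} [NormedAddCommGroup X] [NormedSpace ℝ X]

def IsNumericallyPositive (T : X →L[ℝ] X) : Prop :=
  ∀ x : X, ‖x‖ = 1 → ∃ f : X →L[ℝ] ℝ, ‖f‖ = 1 ∧ f x = 1 ∧ 0 ≤ f (T x)

theorem IsNumericallyPositive.of_norm_id_sub_le_one {T : X →L[ℝ] X}
    (hT : ‖ContinuousLinearMap.id ℝ X - T‖ ≤ 1) : IsNumericallyPositive T := by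
  intro x hx
  obtain ⟨f, hf, hfx⟩ := exists_dual_vector ℝ x (by simp [hx])
  have hfx : f x = 1 := by simpa [hx] using hfx
  refine ⟨f, hf, hfx, ?_⟩
  have hcomp : ‖f.comp (ContinuousLinearMap.id ℝ X - T)‖ ≤ 1 :=
    (f.opNorm_comp_le _).trans (by rw [hf, one_mul]; exact hT)
  have hbound : f (x - T x) ≤ 1 :=
    calc f (x - T x) ≤ ‖f.comp (ContinuousLinearMap.id ℝ X - T) x‖ := le_abs_self _
      _ ≤ 1 * ‖x‖ := ContinuousLinearMap.le_of_opNorm_le _ hcomp x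
      _ = 1 := by rw [hx, one_mul]
  rw [map_sub, hfx] at hbound
  linarith

theorem IsNumericallyPositive.norm_le_norm_add_smul {T : X →L[ℝ] X}
    (hT : IsNumericallyPositive T) {α : ℝ} (hα : 0 ≤ α) (x : X) : ‖x‖ ≤ ‖x + α • T x‖ := by
  rcases eq_or_ne x 0 with rfl | hx
  · simp
  have hnx : 0 < ‖x‖ := norm_pos_iff.mpr hx
  set u := ‖x‖⁻¹ • x
  obtain ⟨f, hf, hfu, hfTu⟩ := hT u (norm_smul_inv_norm hx)
  have hunit : 1 ≤ ‖u + α • T u‖ :=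
    calc 1 ≤ f u + α * f (T u) := by
          rw [hfu]; exact le_add_of_nonneg_right (mul_nonneg hα hfTu)
      _ = f (u + α • T u) := by rw [map_add, f.map_smul α (T u), smul_eq_mul]
      _ ≤ ‖f (u + α • T u)‖ := le_abs_self _
      _ ≤ 1 * ‖u + α • T u‖ := ContinuousLinearMap.le_of_opNorm_le _ hf.le _
      _ = ‖u + α • T u‖ := one_mul _
  have hscale : u + α • T u = ‖x‖⁻¹ • (x + α • T x) := by
    simp only [u, map_smul, smul_add, smul_comm α]
  rw [hscale, norm_smul, norm_inv, norm_norm] at hunit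
  rwa [le_inv_mul_iff₀ hnx, mul_one] at hunit

theorem IsNumericallyPositive.norm_sub_smul_le {P : X →L[ℝ] X} (hP : IsNumericallyPositive P)
    (hidem : IsIdempotentElem P) {c : ℝ} (hc₀ : 0 ≤ c) (hc₁ : c < 1) (y : X) :
    ‖y - c • P y‖ ≤ ‖y‖ := by
  have hPP : P (P y) = P y := congrArg (· y) hidem.eq
  have hc : 0 < 1 - c := sub_pos.mpr hc₁
  have hPz : P (y - c • P y) = (1 - c) • P y := by
    rw [map_sub, map_smul, hPP, sub_smul, one_smul]
  have hinv : (y - c • P y) + (c / (1 - c)) • P (y - c • P y) = y := by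
    rw [hPz, smul_smul, div_mul_cancel₀ c hc.ne', sub_add_cancel]
  calc ‖y - c • P y‖ ≤ ‖(y - c • P y) + (c / (1 - c)) • P (y - c • P y)‖ :=
        hP.norm_le_norm_add_smul (div_nonneg hc₀ hc.le) _
    _ = ‖y‖ := by rw [hinv]

theorem IsNumericallyPositive.norm_id_sub_le_one {P : X →L[ℝ] X} (hP : IsNumericallyPositive P)
    (hidem : IsIdempotentElem P) : ‖ContinuousLinearMap.id ℝ X - P‖ ≤ 1 := by
  refine ContinuousLinearMap.opNorm_le_bound _ zero_le_one fun y => ?_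
  have hlim : Tendsto (fun c : ℝ => ‖y - c • P y‖) (𝓝[<] 1) (𝓝 ‖y - (1 : ℝ) • P y‖) :=
    (by fun_prop : Continuous fun c : ℝ => ‖y - c • P y‖).continuousWithinAt.tendsto
  have hle : ∀ᶠ c in 𝓝[<] (1 : ℝ), ‖y - c • P y‖ ≤ ‖y‖ :=
    Filter.mem_of_superset (Ioo_mem_nhdsLT zero_lt_one) fun c hc =>
      hP.norm_sub_smul_le hidem hc.1.le hc.2 y
  simpa using le_of_tendsto hlim hle

end

theorem stmt0_general {X : Type*} [NormedAddCommGroup X] [NormedSpace ℝ X]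
    (P : X →L[ℝ] X) (hP : P.comp P = P) :
    (∀ x : X, ‖x‖ = 1 → ∃ f : X →L[ℝ] ℝ, ‖f‖ = 1 ∧ f x = 1 ∧ 0 ≤ f (P x)) ↔
      ‖ContinuousLinearMap.id ℝ X - P‖ ≤ 1 :=
  ⟨fun h => IsNumericallyPositive.norm_id_sub_le_one h hP,
    IsNumericallyPositive.of_norm_id_sub_le_one⟩

/-- A projection `P` on a real Banach space is numerically positive
(every norm-one `x` has a norming functional `f` with `f (P x) ≥ 0`)
iff `‖Id − P‖ ≤ 1`. -/
theorem stmt0 {X : Type*} [NormedAddCommGroup X] [NormedSpace ℝ X] [CompleteSpace X]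
    (P : X →L[ℝ] X) (hP : P.comp P = P) :
    (∀ x : X, ‖x‖ = 1 → ∃ f : X →L[ℝ] ℝ, ‖f‖ = 1 ∧ f x = 1 ∧ 0 ≤ f (P x)) ↔
      ‖ContinuousLinearMap.id ℝ X - P‖ ≤ 1 :=
  stmt0_general P hP
end

section
/- Let w = (1, 1, 1, 0) and consider the 4-dimensional Lorentz space ℓ⁴_{w,2} with norm ‖x‖_{w,2} = (Σᵢ wᵢ (xᵢ*)²)^{1/2}, where (xᵢ*) is the nonincreasing rearrangement of (|xᵢ|). Let P₂ : ℝ³ → ℝ³ be the Euclidean orthogonal projection onto ker(e₁* + e₂* + e₃*) ⊂ ℓ₂³, and define P(x₁, x₂, x₃, x₄) = (P₂(x₁, x₂, x₃), 0). Then ‖Px‖_{w,2} ≤ ‖x‖_{w,2} for all x ∈ ℝ⁴; in particular ker(e₁* + e₂* + e₃*) (inside ℝ⁴) is the range of a norm-one projection on ℓ⁴_{w,2}. -/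
/-- The (squared) Lorentz norm `Σ wᵢ (xᵢ*)²` on `ℝⁿ`, expressed as the
maximum over permutations (valid for nonincreasing nonnegative weights). -/
noncomputable def lNormSq {n : ℕ} (w x : Fin n → ℝ) : ℝ :=
  Finset.univ.sup' Finset.univ_nonempty
    (fun σ : Equiv.Perm (Fin n) => ∑ i, w i * (x (σ i)) ^ 2)

/-- `P(x₁,x₂,x₃,x₄) = (P₂(x₁,x₂,x₃), 0)` where `P₂` is the Euclidean orthogonal
projection of `ℝ³` onto `ker(e₁* + e₂* + e₃*)`. -/
noncomputable def projLor : (Fin 4 → ℝ) → (Fin 4 → ℝ) :=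
  fun x i => if (i : ℕ) < 3 then x i - (x 0 + x 1 + x 2) / 3 else 0

/-!
Since `w ≤ 1`, the Lorentz norm is dominated by the Euclidean norm, and (via the identity
rearrangement) it dominates the Euclidean norm of `(x₁, x₂, x₃)`. Hence
`‖Px‖_{w,2} ≤ ‖P₂(x₁, x₂, x₃)‖₂ ≤ ‖(x₁, x₂, x₃)‖₂ ≤ ‖x‖_{w,2}`, the middle step because `P₂`
is an orthogonal projection.
-/

theorem lNormSq_le_sum_sq {n : ℕ} {w : Fin n → ℝ} (hw : ∀ i, w i ≤ 1) (x : Fin n → ℝ) :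
    lNormSq w x ≤ ∑ i, x i ^ 2 := by
  refine Finset.sup'_le _ _ fun σ _ => ?_
  calc ∑ i, w i * x (σ i) ^ 2 ≤ ∑ i, x (σ i) ^ 2 :=
        Finset.sum_le_sum fun i _ => mul_le_of_le_one_left (sq_nonneg _) (hw i)
    _ = ∑ i, x i ^ 2 := Equiv.sum_comp σ (fun i => x i ^ 2)

theorem sum_mul_sq_le_lNormSq {n : ℕ} (w x : Fin n → ℝ) :
    ∑ i, w i * x i ^ 2 ≤ lNormSq w x :=
  Finset.le_sup' (fun σ : Equiv.Perm (Fin n) => ∑ i, w i * x (σ i) ^ 2) (Finset.mem_univ 1)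

theorem sum_sq_projLor (x : Fin 4 → ℝ) :
    ∑ i, projLor x i ^ 2 = x 0 ^ 2 + x 1 ^ 2 + x 2 ^ 2 - (x 0 + x 1 + x 2) ^ 2 / 3 := by
  norm_num [projLor, Fin.sum_univ_four]
  ring

/-- With `w = (1,1,1,0)`, the projection `projLor` is a contraction on
`ℓ⁴_{w,2}`; hence `ker(e₁*+e₂*+e₃*)` is 1-complemented in `ℓ⁴_{w,2}`. -/
theorem stmt4 (x : Fin 4 → ℝ) :
    Real.sqrt (lNormSq ![1, 1, 1, 0] (projLor x)) ≤
      Real.sqrt (lNormSq ![1, 1, 1, 0] x) := by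
  have hw : ∀ i, (![1, 1, 1, 0] : Fin 4 → ℝ) i ≤ 1 := by
    intro i; fin_cases i <;> norm_num
  refine Real.sqrt_le_sqrt ?_
  calc lNormSq ![1, 1, 1, 0] (projLor x) ≤ ∑ i, projLor x i ^ 2 := lNormSq_le_sum_sq hw _
    _ ≤ x 0 ^ 2 + x 1 ^ 2 + x 2 ^ 2 := by
        rw [sum_sq_projLor]
        linarith [sq_nonneg (x 0 + x 1 + x 2)]
    _ = ∑ i, (![1, 1, 1, 0] : Fin 4 → ℝ) i * x i ^ 2 := by simp [Fin.sum_univ_four]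
    _ ≤ lNormSq ![1, 1, 1, 0] x := sum_mul_sq_le_lNormSq _ _
end

section
/- Let φ be an Orlicz function with φ(t) = t² for all 0 ≤ t ≤ a, and let m ∈ ℕ satisfy 1/m ≤ a². Consider the 3m-dimensional Orlicz space ℓ_φ^{3m} with Luxemburg norm, and let F = {x ∈ ℝ^{3m} : x₁ + x₂ + x₃ = 0 and x_k = x_{k+3j} for k = 1, 2, 3 and j = 1, …, m−1}. Then for every x ∈ F, ‖x‖_φ = ‖x‖_{ℓ₂}. -/
/-!
Periodicity repeats each coordinate `m` times, so `x i ^ 2 ≤ ‖x‖₂² / m ≤ a² ‖x‖₂²`. Hence all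
`|x i| / ‖x‖₂` lie in `[0, a]`, where `φ t = t²`, and `∑ φ (|x i| / ‖x‖₂) = 1`. No smaller `l` is
admissible because convexity with `φ 0 = 0` gives `φ (s * t) ≤ s * φ t` for `s ≤ 1`.
-/

noncomputable def luxNorm {N : ℕ} (φ : ℝ → ℝ) (x : Fin N → ℝ) : ℝ :=
  sInf {l : ℝ | 0 < l ∧ ∑ i, φ (|x i| / l) ≤ 1}

open Finset Set

theorem ConvexOn.map_mul_le_mul {φ : ℝ → ℝ} (hφ : ConvexOn ℝ (Ici 0) φ) (h0 : φ 0 ≤ 0)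
    {s t : ℝ} (hs₀ : 0 ≤ s) (hs₁ : s ≤ 1) (ht : 0 ≤ t) : φ (s * t) ≤ s * φ t := by
  have h := hφ.2 (mem_Ici.2 ht) (self_mem_Ici (a := (0 : ℝ))) hs₀ (sub_nonneg.2 hs₁)
    (add_sub_cancel s 1)
  simp only [smul_eq_mul, mul_zero, add_zero] at h
  nlinarith

theorem sq_mul_le_sum_sq_of_periodic {p m : ℕ} {x : Fin (p * m) → ℝ}
    (hper : ∀ i j : Fin (p * m), (i : ℕ) % p = (j : ℕ) % p → x i = x j) (i : Fin (p * m)) :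
    x i ^ 2 * m ≤ ∑ j, x j ^ 2 := by
  have hp : 0 < p := Nat.pos_of_mul_pos_right i.pos
  have hi : (i : ℕ) % p < p := Nat.mod_lt _ hp
  let e : Fin m ↪ Fin (p * m) :=
    ⟨fun k => ⟨p * k + i % p, by nlinarith [k.isLt]⟩, fun k k' h => by
      have := Fin.mk.inj_iff.1 h
      exact Fin.ext (by simpa [hp.ne'] using this)⟩
  have he : ∀ k, x (e k) = x i := fun k =>
    hper _ _ ((Nat.mul_add_mod _ _ _).trans (Nat.mod_mod _ _))
  calc x i ^ 2 * m = ∑ k : Fin m, x (e k) ^ 2 := by simp [he, mul_comm]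
    _ = ∑ j ∈ univ.map e, x j ^ 2 := (sum_map univ e (x · ^ 2)).symm
    _ ≤ ∑ j, x j ^ 2 := sum_le_univ_sum_of_nonneg fun j => sq_nonneg _

section luxNorm

variable {N : ℕ} {φ : ℝ → ℝ}

theorem luxNorm_zero (h0 : φ 0 = 0) : luxNorm φ (0 : Fin N → ℝ) = 0 := by
  have : {l : ℝ | 0 < l ∧ ∑ i : Fin N, φ (|(0 : Fin N → ℝ) i| / l) ≤ 1} = Set.Ioi 0 := by
    ext l
    simp [h0]
  rw [luxNorm, this, csInf_Ioi]

theorem luxNorm_eq_of_sum_eq_one (hφ : ConvexOn ℝ (Ici 0) φ) (h0 : φ 0 ≤ 0) {x : Fin N → ℝ}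
    {E : ℝ} (hE : 0 < E) (hx : ∑ i, φ (|x i| / E) = 1) : luxNorm φ x = E := by
  have hEmem : E ∈ {l : ℝ | 0 < l ∧ ∑ i, φ (|x i| / l) ≤ 1} := ⟨hE, hx.le⟩
  refine le_antisymm (csInf_le ⟨0, fun l hl => hl.1.le⟩ hEmem) (le_csInf ⟨E, hEmem⟩ ?_)
  rintro l ⟨hl, hsum⟩
  by_contra! hlE
  have hscale : ∀ i, φ (|x i| / E) ≤ l / E * φ (|x i| / l) := fun i => by
    have := hφ.map_mul_le_mul h0 (div_pos hl hE).le ((div_le_one hE).2 hlE.le)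
      (div_nonneg (abs_nonneg (x i)) hl.le)
    rwa [div_mul_div_comm, mul_comm l, mul_div_mul_right _ _ hl.ne'] at this
  have : 1 ≤ l / E := calc
    1 = ∑ i, φ (|x i| / E) := hx.symm
    _ ≤ ∑ i, l / E * φ (|x i| / l) := sum_le_sum fun i _ => hscale i
    _ = l / E * ∑ i, φ (|x i| / l) := (mul_sum _ _ _).symm
    _ ≤ l / E := mul_le_of_le_one_right (div_pos hl hE).le hsum
  exact hlE.not_ge ((one_le_div hE).1 this)

theorem luxNorm_eq_sqrt_sum_sq (hφ : ConvexOn ℝ (Ici 0) φ) {a : ℝ} (ha : 0 ≤ a)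
    (hφa : ∀ t ∈ Icc 0 a, φ t = t ^ 2) {x : Fin N → ℝ}
    (hx : ∀ i, |x i| ≤ a * √(∑ j, x j ^ 2)) : luxNorm φ x = √(∑ j, x j ^ 2) := by
  have h0 : φ 0 = 0 := by simpa using hφa 0 ⟨le_rfl, ha⟩
  have hE0 : 0 ≤ √(∑ j, x j ^ 2) := Real.sqrt_nonneg _
  have hE2 : √(∑ j, x j ^ 2) ^ 2 = ∑ j, x j ^ 2 :=
    Real.sq_sqrt (sum_nonneg fun j _ => sq_nonneg _)
  generalize √(∑ j, x j ^ 2) = E at hx hE0 hE2 ⊢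
  rcases hE0.eq_or_lt with rfl | hE
  · have hx0 : x = 0 := funext fun i => abs_nonpos_iff.1 (by simpa using hx i)
    rw [hx0, luxNorm_zero h0]
  refine luxNorm_eq_of_sum_eq_one hφ h0.le hE ?_
  calc ∑ i, φ (|x i| / E) = ∑ i, x i ^ 2 / E ^ 2 := sum_congr rfl fun i _ => by
        rw [hφa _ ⟨by positivity, (div_le_iff₀ hE).2 (hx i)⟩, div_pow, sq_abs]
    _ = 1 := by rw [← sum_div, ← hE2, div_self (by positivity)]

end luxNorm

/-- If `φ(t) = t²` on `[0,a]` and `1/m ≤ a²`, then on the subspace `F` of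
3-periodic vectors of `ℝ^{3m}` whose first three coordinates sum to zero,
the Luxemburg norm coincides with the Euclidean norm. -/
theorem stmt6 (φ : ℝ → ℝ) (hconv : ConvexOn ℝ (Set.Ici 0) φ)
    (a : ℝ) (ha : 0 < a) (hφ2 : ∀ t ∈ Set.Icc 0 a, φ t = t ^ 2)
    (m : ℕ) (hma : 1 / (m : ℝ) ≤ a ^ 2)
    (x : Fin (3 * m) → ℝ)
    (hper : ∀ i j : Fin (3 * m), (i : ℕ) % 3 = (j : ℕ) % 3 → x i = x j) :
    luxNorm φ x = Real.sqrt (∑ i, (x i) ^ 2) := by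
  refine luxNorm_eq_sqrt_sum_sq hconv ha.le hφ2 fun i => ?_
  have hm : (0 : ℝ) < m := by exact_mod_cast Nat.pos_of_mul_pos_left i.pos
  have hS : 0 ≤ ∑ j, x j ^ 2 := sum_nonneg fun j _ => sq_nonneg _
  have hxi : x i ^ 2 ≤ (a * √(∑ j, x j ^ 2)) ^ 2 := calc
    x i ^ 2 ≤ (∑ j, x j ^ 2) / m := (le_div_iff₀ hm).2 (sq_mul_le_sum_sq_of_periodic hper i)
    _ ≤ a ^ 2 * ∑ j, x j ^ 2 := by
      rw [div_eq_mul_one_div, mul_comm]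
      exact mul_le_mul_of_nonneg_right hma hS
    _ = (a * √(∑ j, x j ^ 2)) ^ 2 := by rw [mul_pow, Real.sq_sqrt hS]
  exact abs_le_of_sq_le_sq hxi (by positivity)
end

section
/- Let φ be an Orlicz function with φ(t) = t² for 0 ≤ t ≤ a, let m ∈ ℕ with 1/m ≤ a², and let F ⊂ ℝ^{3m} be the subspace of 3-periodic vectors whose first three coordinates sum to zero. If Q : ℝ^{3m} → F is the orthogonal (ℓ₂-contractive) projection onto F, then Q is also contractive with respect to the Luxemburg norm ‖·‖_φ; hence F is 1-complemented in ℓ_φ^{3m}. -/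
/-- Membership in the subspace `F` of 3-periodic vectors whose first three
coordinates sum to zero. -/
def memF (m : ℕ) (hm : 0 < m) (x : Fin (3 * m) → ℝ) : Prop :=
  (∀ i j : Fin (3 * m), (i : ℕ) % 3 = (j : ℕ) % 3 → x i = x j) ∧
    x ⟨0, by omega⟩ + x ⟨1, by omega⟩ + x ⟨2, by omega⟩ = 0

lemma phi_ge_id {φ : ℝ → ℝ} (hconv : ConvexOn ℝ (Set.Ici 0) φ)
    (h0 : φ 0 = 0) (h1 : φ 1 = 1) {t : ℝ} (ht : 1 ≤ t) : t ≤ φ t := by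
  have ht0 : 0 < t := lt_of_lt_of_le one_pos ht
  have hb : (0:ℝ) < 1 / t := by positivity
  have hab : (1 - 1/t) + 1/t = 1 := by ring
  have h := hconv.2 (Set.mem_Ici.mpr le_rfl) (Set.mem_Ici.mpr ht0.le)
    (by have : 1/t ≤ 1 := by rw [div_le_one ht0]; exact ht
        linarith) hb.le hab
  simp only [smul_eq_mul, mul_zero, zero_add] at h
  rw [one_div_mul_cancel ht0.ne', h1, h0, mul_zero, zero_add] at h
  calc t = t * 1 := by ring
    _ ≤ t * (1/t * φ t) := by
        apply mul_le_mul_of_nonneg_left h ht0.le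
    _ = φ t := by field_simp

lemma phi_nonneg {φ : ℝ → ℝ} (hmono : MonotoneOn φ (Set.Ici 0))
    (h0 : φ 0 = 0) {t : ℝ} (ht : 0 ≤ t) : 0 ≤ φ t := by
  have := hmono (Set.mem_Ici.mpr le_rfl) (Set.mem_Ici.mpr ht) ht
  rw [h0] at this; exact this

/-- (A): ℓ₂ ≤ Luxemburg. -/
lemma l2_le_lux {φ : ℝ → ℝ} (hconv : ConvexOn ℝ (Set.Ici 0) φ)
    (hmono : MonotoneOn φ (Set.Ici 0)) (h0 : φ 0 = 0) (h1 : φ 1 = 1)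
    {a : ℝ} (ha : 0 < a) (hφ2 : ∀ t ∈ Set.Icc 0 a, φ t = t ^ 2)
    (hφge : ∀ t ∈ Set.Icc (0 : ℝ) 1, t ^ 2 ≤ φ t)
    {N : ℕ} (x : Fin N → ℝ) :
    Real.sqrt (∑ i, (x i) ^ 2) ≤ luxNorm φ x := by
  set S := Real.sqrt (∑ i, (x i) ^ 2) with hSdef
  have hsum0 : 0 ≤ ∑ i, (x i) ^ 2 := Finset.sum_nonneg fun i _ => sq_nonneg _
  have hS0 : 0 ≤ S := Real.sqrt_nonneg _
  have hxS : ∀ i, |x i| ≤ S := by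
    intro i
    rw [hSdef, ← Real.sqrt_sq_eq_abs]
    exact Real.sqrt_le_sqrt (Finset.single_le_sum (fun j _ => sq_nonneg (x j))
      (Finset.mem_univ i))
  have hmin : 0 < min a 1 := lt_min ha one_pos
  apply le_csInf
  · -- nonempty
    refine ⟨(S + 1) / min a 1, ⟨by positivity, ?_⟩⟩
    have hl0 : 0 < (S + 1) / min a 1 := by positivity
    have hlS : S + 1 ≤ (S + 1) / min a 1 := by
      rw [le_div_iff₀ hmin]
      nlinarith [min_le_right a 1]
    have key : ∀ i, φ (|x i| / ((S + 1) / min a 1)) = (|x i| / ((S + 1) / min a 1)) ^ 2 := by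
      intro i
      apply hφ2
      constructor
      · positivity
      · rw [div_le_iff₀ hl0]
        calc |x i| ≤ S := hxS i
          _ ≤ a * (S + 1) / min a 1 := by
              rw [le_div_iff₀ hmin]
              nlinarith [min_le_left a 1, min_le_right a 1]
          _ = a * ((S + 1) / min a 1) := by ring
    calc ∑ i, φ (|x i| / ((S + 1) / min a 1))
        = ∑ i, (|x i| / ((S + 1) / min a 1)) ^ 2 := by
          exact Finset.sum_congr rfl fun i _ => key i
      _ = (∑ i, (x i) ^ 2) / ((S + 1) / min a 1) ^ 2 := by
          rw [Finset.sum_div]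
          exact Finset.sum_congr rfl fun i _ => by
            rw [div_pow, sq_abs]
      _ ≤ 1 := by
          rw [div_le_one (by positivity)]
          have hSsq : S ^ 2 = ∑ i, (x i) ^ 2 := Real.sq_sqrt hsum0
          nlinarith
  · -- lower bound
    rintro l ⟨hl, hsum⟩
    have hle1 : ∀ i, |x i| / l ≤ 1 := by
      intro i
      by_contra hgt
      push_neg at hgt
      have h1le : 1 < φ (|x i| / l) :=
        lt_of_lt_of_le hgt (phi_ge_id hconv h0 h1 hgt.le)
      have : φ (|x i| / l) ≤ ∑ j, φ (|x j| / l) :=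
        Finset.single_le_sum (f := fun j => φ (|x j| / l))
          (fun j _ => phi_nonneg hmono h0 (by positivity)) (Finset.mem_univ i)
      linarith
    have hsq : ∑ i, (|x i| / l) ^ 2 ≤ 1 := by
      refine le_trans (Finset.sum_le_sum fun i _ => ?_) hsum
      exact hφge _ ⟨by positivity, hle1 i⟩
    have : (∑ i, (x i) ^ 2) ≤ l ^ 2 := by
      have : ∑ i, (|x i| / l) ^ 2 = (∑ i, (x i) ^ 2) / l ^ 2 := by
        rw [Finset.sum_div]
        exact Finset.sum_congr rfl fun i _ => by rw [div_pow, sq_abs]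
      rw [this, div_le_one (by positivity)] at hsq
      exact hsq
    calc S ≤ Real.sqrt (l ^ 2) := Real.sqrt_le_sqrt this
      _ = l := Real.sqrt_sq hl.le

lemma periodic_sq_bound {m : ℕ} (hm : 0 < m) (y : Fin (3 * m) → ℝ)
    (hper : ∀ i j : Fin (3 * m), (i : ℕ) % 3 = (j : ℕ) % 3 → y i = y j)
    (i : Fin (3 * m)) : (m : ℝ) * (y i) ^ 2 ≤ ∑ j, (y j) ^ 2 := by
  have hi3 : (i : ℕ) % 3 < 3 := Nat.mod_lt _ (by norm_num)
  set f : Fin m → Fin (3 * m) := fun k => ⟨3 * k + (i : ℕ) % 3, by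
    have := k.isLt; omega⟩ with hf
  have hinj : ∀ p ∈ Finset.univ, ∀ q ∈ Finset.univ, f p = f q → p = q := by
    intro p _ q _ h
    have : (3 : ℕ) * p + (i : ℕ) % 3 = 3 * q + (i : ℕ) % 3 := congrArg Fin.val h
    exact Fin.ext (by omega)
  have hval : ∀ k, y (f k) = y i := fun k => hper _ _ (by
    show (3 * (k : ℕ) + (i : ℕ) % 3) % 3 = (i : ℕ) % 3
    omega)
  calc (m : ℝ) * (y i) ^ 2 = ∑ _k : Fin m, (y i) ^ 2 := by
        rw [Finset.sum_const, Finset.card_univ, Fintype.card_fin, nsmul_eq_mul]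
    _ = ∑ k : Fin m, (y (f k)) ^ 2 := by
        exact Finset.sum_congr rfl fun k _ => by rw [hval]
    _ = ∑ j ∈ Finset.univ.image f, (y j) ^ 2 := by rw [Finset.sum_image hinj]
    _ ≤ ∑ j, (y j) ^ 2 := Finset.sum_le_sum_of_subset_of_nonneg
        (Finset.subset_univ _) (fun j _ _ => sq_nonneg _)

/-- The `ℓ₂`-orthogonal projection `Q` onto `F` is also contractive for the
Luxemburg norm; hence `F` is 1-complemented in `ℓ_φ^{3m}`. -/
theorem stmt7 (φ : ℝ → ℝ) (hconv : ConvexOn ℝ (Set.Ici 0) φ)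
    (hmono : MonotoneOn φ (Set.Ici 0)) (h0 : φ 0 = 0) (h1 : φ 1 = 1)
    (a : ℝ) (ha : 0 < a) (hφ2 : ∀ t ∈ Set.Icc 0 a, φ t = t ^ 2)
    (hφge : ∀ t ∈ Set.Icc (0 : ℝ) 1, t ^ 2 ≤ φ t)
    (m : ℕ) (hm : 0 < m) (hma : 1 / (m : ℝ) ≤ a ^ 2)
    (Q : (Fin (3 * m) → ℝ) →ₗ[ℝ] (Fin (3 * m) → ℝ))
    (hQF : ∀ x, memF m hm (Q x))
    (hQfix : ∀ x, memF m hm x → Q x = x)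
    (hQ2 : ∀ x, Real.sqrt (∑ i, (Q x i) ^ 2) ≤ Real.sqrt (∑ i, (x i) ^ 2)) :
    ∀ x, luxNorm φ (Q x) ≤ luxNorm φ x := by
  intro x
  have hA : Real.sqrt (∑ i, (x i) ^ 2) ≤ luxNorm φ x :=
    l2_le_lux hconv hmono h0 h1 ha hφ2 hφge x
  set y := Q x with hy
  have hyper := (hQF x).1
  have hbdd : BddBelow {l : ℝ | 0 < l ∧ ∑ i, φ (|y i| / l) ≤ 1} :=
    ⟨0, fun l hl => hl.1.le⟩
  have hB : luxNorm φ y ≤ Real.sqrt (∑ i, (y i) ^ 2) := by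
    by_cases hz : ∀ i, y i = 0
    · have hset : {l : ℝ | 0 < l ∧ ∑ i, φ (|y i| / l) ≤ 1} = Set.Ioi 0 := by
        ext l
        simp only [Set.mem_setOf_eq, Set.mem_Ioi]
        constructor
        · exact fun h => h.1
        · intro hl
          refine ⟨hl, ?_⟩
          have : ∀ i, φ (|y i| / l) = 0 := fun i => by
            rw [hz i, abs_zero, zero_div, h0]
          simp [this]
      rw [luxNorm, hset, csInf_Ioi]
      exact Real.sqrt_nonneg _
    · push_neg at hz
      obtain ⟨i0, hi0⟩ := hz
      set S := Real.sqrt (∑ i, (y i) ^ 2) with hSdef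
      have hsum0 : 0 < ∑ i, (y i) ^ 2 := by
        have := Finset.single_le_sum (fun j (_ : j ∈ Finset.univ) => sq_nonneg (y j))
          (Finset.mem_univ i0)
        nlinarith [sq_nonneg (y i0), pow_pos (abs_pos.mpr hi0) 2,
          sq_abs (y i0)]
      have hS : 0 < S := Real.sqrt_pos.mpr hsum0
      have hSsq : S ^ 2 = ∑ i, (y i) ^ 2 := Real.sq_sqrt hsum0.le
      apply csInf_le hbdd
      refine ⟨hS, ?_⟩
      have hcoord : ∀ i, |y i| / S ≤ a := by
        intro i
        have hkey := periodic_sq_bound hm y hyper i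
        have hm' : (0 : ℝ) < m := Nat.cast_pos.mpr hm
        have h2 : (y i) ^ 2 ≤ S ^ 2 / m := by
          rw [le_div_iff₀ hm', hSsq]
          linarith
        have h3 : (|y i| / S) ^ 2 ≤ a ^ 2 := by
          rw [div_pow, sq_abs, div_le_iff₀ (by positivity)]
          calc (y i) ^ 2 ≤ S ^ 2 / m := h2
            _ = 1 / (m:ℝ) * S ^ 2 := by ring
            _ ≤ a ^ 2 * S ^ 2 := mul_le_mul_of_nonneg_right hma (by positivity)
        have := Real.sqrt_le_sqrt h3
        rwa [Real.sqrt_sq (by positivity), Real.sqrt_sq ha.le] at this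
      have hφeq : ∀ i, φ (|y i| / S) = (|y i| / S) ^ 2 := fun i =>
        hφ2 _ ⟨by positivity, hcoord i⟩
      calc ∑ i, φ (|y i| / S) = ∑ i, (|y i| / S) ^ 2 :=
            Finset.sum_congr rfl fun i _ => hφeq i
        _ = (∑ i, (y i) ^ 2) / S ^ 2 := by
            rw [Finset.sum_div]
            exact Finset.sum_congr rfl fun i _ => by rw [div_pow, sq_abs]
        _ = 1 := by rw [← hSsq]; field_simp
        _ ≤ 1 := le_rfl
  calc luxNorm φ y ≤ Real.sqrt (∑ i, (y i) ^ 2) := hB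
    _ ≤ Real.sqrt (∑ i, (x i) ^ 2) := hQ2 x
    _ ≤ luxNorm φ x := hA
end

section
/- Let X be a real Banach space with a 1-unconditional basis {e_i} satisfying property (P): ‖e_i + ε e_j‖ > 1 for all i ≠ j and ε > 0, and property (Q): lim_{ε→0} (‖e_i + ε e_j‖ − 1)/ε = 0 for all i ≠ j. Suppose Y = ∩_{j=1}^n ker f_j is a subspace of codimension n with f_j(e_k) = δ_{jk} for j, k ≤ n, and P = Id − Σ_{j=1}^n f_j ⊗ u_j is a projection onto Y (f_j(u_k) = δ_{jk}) with ‖P‖ = 1. Then ∪_{j=1}^n supp u_j = ∪_{j=1}^n supp f_j. -/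
/-!
Write `P = Id - Σ fⱼ ⊗ uⱼ`. Unconditionality makes every coordinate projection onto a finite set of
basis vectors contractive, and makes `‖e i + a • e i'‖` depend only on `|a|`.

If `f j (e i) ≠ 0` but every `uₖ` vanishes at `i`, then `e i - P (e i) = Σ fₖ(e i) uₖ` is non-zero
and vanishes at `i`, so it has a non-zero coordinate `a` at some `i' ≠ i`; projecting `P (e i)` onto
`{i, i'}` gives `‖e i - a • e i'‖ ≤ ‖P (e i)‖ ≤ 1`, contradicting (P).

If `c = coord i (u j) ≠ 0` but every `fₖ` vanishes at `e i`, then for `x = e i ± δ • e (κ j)` we get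
`P x = x ∓ δ • u j`, whose `i`-th coordinate `1 ∓ δ c` has modulus `1 + δ |c|` for the right sign.
Hence `δ |c| ≤ ‖e i + δ • e (κ j)‖ - 1` for all `δ > 0`, which (Q) forbids.
-/

open Filter Topology

theorem nonpos_of_forall_mul_le_of_tendsto_div {φ : ℝ → ℝ} {c : ℝ}
    (hφ : Tendsto (fun ε => φ ε / ε) (𝓝[≠] 0) (𝓝 0)) (hle : ∀ δ > 0, δ * c ≤ φ δ) : c ≤ 0 := by
  have hright : 𝓝[>] (0 : ℝ) ≤ 𝓝[≠] 0 := nhdsWithin_mono 0 fun x hx => ne_of_gt hx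
  refine ge_of_tendsto (hφ.mono_left hright) ?_
  filter_upwards [self_mem_nhdsWithin] with δ (hδ : 0 < δ)
  exact (le_div_iff₀ hδ).2 (by linarith [hle δ hδ])

section UnconditionalBasis

variable {X : Type*} [NormedAddCommGroup X] [NormedSpace ℝ X] {ι : Type*} [DecidableEq ι]
  {e : ι → X} {coord : ι → X →L[ℝ] ℝ}

theorem coord_sum_smul (hbior : ∀ i j, coord i (e j) = if i = j then 1 else 0)
    (s : Finset ι) (c : ι → ℝ) (k : ι) :
    coord k (∑ i ∈ s, c i • e i) = if k ∈ s then c k else 0 := by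
  simp [map_sum, hbior]

theorem norm_sum_coord_smul_le (hbior : ∀ i j, coord i (e j) = if i = j then 1 else 0)
    (hsep : ∀ x : X, (∀ i, coord i x = 0) → x = 0)
    (huncond : ∀ σ : ι → ℝ, (∀ i, σ i = 1 ∨ σ i = -1) →
      ∃ D : X ≃ₗᵢ[ℝ] X, ∀ (x : X) (i : ι), coord i (D x) = σ i * coord i x)
    (s : Finset ι) (x : X) :
    ‖∑ i ∈ s, coord i x • e i‖ ≤ ‖x‖ := by
  obtain ⟨D, hD⟩ := huncond (fun k => if k ∈ s then 1 else -1) fun k => by split_ifs <;> simp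
  have hmid : ∑ i ∈ s, coord i x • e i = (1 / 2 : ℝ) • (x + D x) := by
    refine sub_eq_zero.mp (hsep _ fun k => ?_)
    rw [map_sub, coord_sum_smul hbior]
    simp only [map_smul, map_add, hD, smul_eq_mul]
    split_ifs <;> ring
  calc ‖∑ i ∈ s, coord i x • e i‖ = 1 / 2 * ‖x + D x‖ := by rw [hmid, norm_smul]; norm_num
    _ ≤ 1 / 2 * (‖x‖ + ‖D x‖) := by gcongr; exact norm_add_le _ _
    _ = ‖x‖ := by rw [D.norm_map]; ring

theorem abs_coord_le_norm (hbior : ∀ i j, coord i (e j) = if i = j then 1 else 0)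
    (hnorme : ∀ i, ‖e i‖ = 1) (hsep : ∀ x : X, (∀ i, coord i x = 0) → x = 0)
    (huncond : ∀ σ : ι → ℝ, (∀ i, σ i = 1 ∨ σ i = -1) →
      ∃ D : X ≃ₗᵢ[ℝ] X, ∀ (x : X) (i : ι), coord i (D x) = σ i * coord i x)
    (i : ι) (x : X) : |coord i x| ≤ ‖x‖ := by
  simpa [norm_smul, hnorme] using norm_sum_coord_smul_le hbior hsep huncond {i} x

theorem norm_coord_smul_add_coord_smul_le (hbior : ∀ i j, coord i (e j) = if i = j then 1 else 0)
    (hsep : ∀ x : X, (∀ i, coord i x = 0) → x = 0)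
    (huncond : ∀ σ : ι → ℝ, (∀ i, σ i = 1 ∨ σ i = -1) →
      ∃ D : X ≃ₗᵢ[ℝ] X, ∀ (x : X) (i : ι), coord i (D x) = σ i * coord i x)
    {i i' : ι} (hii' : i ≠ i') (x : X) :
    ‖coord i x • e i + coord i' x • e i'‖ ≤ ‖x‖ := by
  simpa [Finset.sum_pair hii'] using norm_sum_coord_smul_le hbior hsep huncond {i, i'} x

theorem norm_add_neg_smul_eq (hbior : ∀ i j, coord i (e j) = if i = j then 1 else 0)
    (hsep : ∀ x : X, (∀ i, coord i x = 0) → x = 0)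
    (huncond : ∀ σ : ι → ℝ, (∀ i, σ i = 1 ∨ σ i = -1) →
      ∃ D : X ≃ₗᵢ[ℝ] X, ∀ (x : X) (i : ι), coord i (D x) = σ i * coord i x)
    {i i' : ι} (hii' : i ≠ i') (a : ℝ) :
    ‖e i + (-a) • e i'‖ = ‖e i + a • e i'‖ := by
  obtain ⟨D, hD⟩ := huncond (fun k => if k = i' then -1 else 1) fun k => by split_ifs <;> simp
  have hflip : D (e i + a • e i') = e i + (-a) • e i' := by
    refine sub_eq_zero.mp (hsep _ fun k => ?_)
    by_cases hk : k = i' <;> simp [hD, hbior, hk, hii'.symm]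
  rw [← hflip, D.norm_map]

theorem norm_add_smul_eq_norm_add_abs_smul (hbior : ∀ i j, coord i (e j) = if i = j then 1 else 0)
    (hsep : ∀ x : X, (∀ i, coord i x = 0) → x = 0)
    (huncond : ∀ σ : ι → ℝ, (∀ i, σ i = 1 ∨ σ i = -1) →
      ∃ D : X ≃ₗᵢ[ℝ] X, ∀ (x : X) (i : ι), coord i (D x) = σ i * coord i x)
    {i i' : ι} (hii' : i ≠ i') (a : ℝ) :
    ‖e i + a • e i'‖ = ‖e i + |a| • e i'‖ := by
  rcases abs_choice a with h | h <;> rw [h]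
  exact (norm_add_neg_smul_eq hbior hsep huncond hii' a).symm

end UnconditionalBasis

section NormOneProjection

variable {X : Type*} [NormedAddCommGroup X] [NormedSpace ℝ X] {ι : Type*} [DecidableEq ι]
  {e : ι → X} {coord : ι → X →L[ℝ] ℝ} {n : ℕ} {f : Fin n → X →L[ℝ] ℝ} {u : Fin n → X}

theorem id_sub_sum_smulRight_apply (x : X) :
    (ContinuousLinearMap.id ℝ X - ∑ j, (f j).smulRight (u j)) x = x - ∑ j, f j x • u j := by
  simp

theorem exists_coord_ne_zero_of_apply_ne_zero
    (hbior : ∀ i j, coord i (e j) = if i = j then 1 else 0)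
    (hnorme : ∀ i, ‖e i‖ = 1)
    (hsep : ∀ x : X, (∀ i, coord i x = 0) → x = 0)
    (huncond : ∀ σ : ι → ℝ, (∀ i, σ i = 1 ∨ σ i = -1) →
      ∃ D : X ≃ₗᵢ[ℝ] X, ∀ (x : X) (i : ι), coord i (D x) = σ i * coord i x)
    (hPprop : ∀ i j : ι, i ≠ j → ∀ ε : ℝ, 0 < ε → 1 < ‖e i + ε • e j‖)
    (hfu : ∀ j k : Fin n, f j (u k) = if j = k then 1 else 0)
    (hnorm : ‖ContinuousLinearMap.id ℝ X - ∑ j, (f j).smulRight (u j)‖ ≤ 1)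
    {i : ι} {j : Fin n} (hj : f j (e i) ≠ 0) : ∃ k, coord i (u k) ≠ 0 := by
  by_contra! hu
  set w := ∑ k, f k (e i) • u k
  have hfw : f j w = f j (e i) := by simp [w, map_sum, hfu]
  have hwi : coord i w = 0 := by simp [w, map_sum, hu]
  obtain ⟨i', hi'⟩ : ∃ i', coord i' w ≠ 0 := by
    by_contra! h
    exact hj (by rw [← hfw, hsep w h, map_zero])
  have hii' : i ≠ i' := by rintro rfl; exact hi' hwi
  have hPe : ‖e i + (-coord i' w) • e i'‖ ≤ 1 := calc
    _ = ‖coord i (e i - w) • e i + coord i' (e i - w) • e i'‖ := by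
      simp [hbior, hwi, hii'.symm]
    _ ≤ ‖e i - w‖ := norm_coord_smul_add_coord_smul_le hbior hsep huncond hii' _
    _ ≤ 1 := by
      simpa [id_sub_sum_smulRight_apply, hnorme, w] using
        (ContinuousLinearMap.id ℝ X - ∑ j, (f j).smulRight (u j)).le_of_opNorm_le hnorm (e i)
  rw [norm_add_smul_eq_norm_add_abs_smul hbior hsep huncond hii', abs_neg] at hPe
  exact (hPprop i i' hii' _ (abs_pos.2 hi')).not_ge hPe

theorem abs_one_sub_mul_coord_le_norm
    (hbior : ∀ i j, coord i (e j) = if i = j then 1 else 0)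
    (hnorme : ∀ i, ‖e i‖ = 1)
    (hsep : ∀ x : X, (∀ i, coord i x = 0) → x = 0)
    (huncond : ∀ σ : ι → ℝ, (∀ i, σ i = 1 ∨ σ i = -1) →
      ∃ D : X ≃ₗᵢ[ℝ] X, ∀ (x : X) (i : ι), coord i (D x) = σ i * coord i x)
    (hnorm : ‖ContinuousLinearMap.id ℝ X - ∑ j, (f j).smulRight (u j)‖ ≤ 1)
    {i m : ι} (him : i ≠ m) {j : Fin n} (hfm : ∀ k, f k (e m) = if k = j then 1 else 0)
    (hfi : ∀ k, f k (e i) = 0) (t : ℝ) :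
    |1 - t * coord i (u j)| ≤ ‖e i + |t| • e m‖ := by
  set P := ContinuousLinearMap.id ℝ X - ∑ j, (f j).smulRight (u j)
  set x := e i + t • e m
  have hPx : P x = x - t • u j := by
    rw [id_sub_sum_smulRight_apply]
    simp [x, hfi, hfm]
  calc |1 - t * coord i (u j)| = |coord i (P x)| := by
        rw [hPx]; simp [x, hbior, him]
    _ ≤ ‖P x‖ := abs_coord_le_norm hbior hnorme hsep huncond i _
    _ ≤ ‖x‖ := by simpa using P.le_of_opNorm_le hnorm x
    _ = ‖e i + |t| • e m‖ := norm_add_smul_eq_norm_add_abs_smul hbior hsep huncond him t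

theorem exists_apply_ne_zero_of_coord_ne_zero
    (hbior : ∀ i j, coord i (e j) = if i = j then 1 else 0)
    (hnorme : ∀ i, ‖e i‖ = 1)
    (hsep : ∀ x : X, (∀ i, coord i x = 0) → x = 0)
    (huncond : ∀ σ : ι → ℝ, (∀ i, σ i = 1 ∨ σ i = -1) →
      ∃ D : X ≃ₗᵢ[ℝ] X, ∀ (x : X) (i : ι), coord i (D x) = σ i * coord i x)
    (hQprop : ∀ i j : ι, i ≠ j →
      Tendsto (fun ε : ℝ => (‖e i + ε • e j‖ - 1) / ε) (𝓝[≠] 0) (𝓝 0))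
    {κ : Fin n → ι} (hfe : ∀ j k : Fin n, f j (e (κ k)) = if j = k then 1 else 0)
    (hnorm : ‖ContinuousLinearMap.id ℝ X - ∑ j, (f j).smulRight (u j)‖ ≤ 1)
    {i : ι} {j : Fin n} (hu : coord i (u j) ≠ 0) : ∃ k, f k (e i) ≠ 0 := by
  by_contra! hfi
  have hiκ : i ≠ κ j := by rintro rfl; simpa [hfi j] using hfe j j
  have key := abs_one_sub_mul_coord_le_norm hbior hnorme hsep huncond hnorm hiκ (hfe · j) hfi
  have hgrowth : ∀ δ > 0, δ * |coord i (u j)| ≤ ‖e i + δ • e (κ j)‖ - 1 := by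
    intro δ hδ
    rcases le_total 0 (coord i (u j)) with hc | hc
    · have := (le_abs_self _).trans (key (-δ))
      rw [abs_neg, abs_of_pos hδ] at this
      rw [abs_of_nonneg hc]
      linarith
    · have := (le_abs_self _).trans (key δ)
      rw [abs_of_pos hδ] at this
      rw [abs_of_nonpos hc]
      linarith
  exact hu (abs_nonpos_iff.1 (nonpos_of_forall_mul_le_of_tendsto_div (hQprop i (κ j) hiκ) hgrowth))

end NormOneProjection

theorem stmt8_general {X : Type*} [NormedAddCommGroup X] [NormedSpace ℝ X]
    {ι : Type*} [DecidableEq ι] (e : ι → X) (coord : ι → X →L[ℝ] ℝ)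
    (hbior : ∀ i j, coord i (e j) = if i = j then 1 else 0)
    (hnorme : ∀ i, ‖e i‖ = 1)
    (hsep : ∀ x : X, (∀ i, coord i x = 0) → x = 0)
    (huncond : ∀ σ : ι → ℝ, (∀ i, σ i = 1 ∨ σ i = -1) →
      ∃ D : X ≃ₗᵢ[ℝ] X, ∀ (x : X) (i : ι), coord i (D x) = σ i * coord i x)
    (hPprop : ∀ i j : ι, i ≠ j → ∀ ε : ℝ, 0 < ε → 1 < ‖e i + ε • e j‖)
    (hQprop : ∀ i j : ι, i ≠ j →
      Tendsto (fun ε : ℝ => (‖e i + ε • e j‖ - 1) / ε) (nhdsWithin 0 {(0:ℝ)}ᶜ) (nhds 0))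
    (n : ℕ) (f : Fin n → X →L[ℝ] ℝ) (u : Fin n → X)
    (κ : Fin n → ι)
    (hfe : ∀ j k : Fin n, f j (e (κ k)) = if j = k then 1 else 0)
    (hfu : ∀ j k : Fin n, f j (u k) = if j = k then 1 else 0)
    (hnorm : ‖ContinuousLinearMap.id ℝ X - ∑ j, (f j).smulRight (u j)‖ = 1) :
    (⋃ j, {i : ι | coord i (u j) ≠ 0}) = (⋃ j, {i : ι | f j (e i) ≠ 0}) := by
  ext i
  simp only [Set.mem_iUnion, Set.mem_ofPred_eq]
  exact ⟨fun ⟨_, hu⟩ =>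
      exists_apply_ne_zero_of_coord_ne_zero hbior hnorme hsep huncond hQprop hfe hnorm.le hu,
    fun ⟨_, hf⟩ =>
      exists_coord_ne_zero_of_apply_ne_zero hbior hnorme hsep huncond hPprop hfu hnorm.le hf⟩

/-- Support lemma: if `X` has a 1-unconditional basis with properties (P) and (Q),
and `P = Id − Σ fⱼ ⊗ uⱼ` is a norm-one projection, then
`⋃ supp uⱼ = ⋃ supp fⱼ`. -/
theorem stmt8 {X : Type*} [NormedAddCommGroup X] [NormedSpace ℝ X] [CompleteSpace X]
    {ι : Type*} [DecidableEq ι] (e : ι → X) (coord : ι → X →L[ℝ] ℝ)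
    (hbior : ∀ i j, coord i (e j) = if i = j then 1 else 0)
    (hnorme : ∀ i, ‖e i‖ = 1)
    (hsep : ∀ x : X, (∀ i, coord i x = 0) → x = 0)
    (huncond : ∀ σ : ι → ℝ, (∀ i, σ i = 1 ∨ σ i = -1) →
      ∃ D : X ≃ₗᵢ[ℝ] X, ∀ (x : X) (i : ι), coord i (D x) = σ i * coord i x)
    (hPprop : ∀ i j : ι, i ≠ j → ∀ ε : ℝ, 0 < ε → 1 < ‖e i + ε • e j‖)
    (hQprop : ∀ i j : ι, i ≠ j →
      Tendsto (fun ε : ℝ => (‖e i + ε • e j‖ - 1) / ε) (nhdsWithin 0 {(0:ℝ)}ᶜ) (nhds 0))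
    (n : ℕ) (f : Fin n → X →L[ℝ] ℝ) (u : Fin n → X)
    (κ : Fin n → ι) (hκ : Function.Injective κ)
    (hfe : ∀ j k : Fin n, f j (e (κ k)) = if j = k then 1 else 0)
    (hfu : ∀ j k : Fin n, f j (u k) = if j = k then 1 else 0)
    (hnorm : ‖ContinuousLinearMap.id ℝ X - ∑ j, (f j).smulRight (u j)‖ = 1) :
    (⋃ j, {i : ι | coord i (u j) ≠ 0}) = (⋃ j, {i : ι | f j (e i) ≠ 0}) :=
  stmt8_general e coord hbior hnorme hsep huncond hPprop hQprop n f u κ hfe hfu hnorm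
end

section
/- Let X be a real Banach space with 1-unconditional basis {e_i} satisfying property (P) (‖e_i + ε e_j‖ > 1 for all i ≠ j, ε > 0). If P : X → X is a linear map with ‖P‖ ≤ 1 and (P e_k)_k = 1 for some index k (i.e., the k-th coordinate of P e_k equals 1), then P e_k = e_k. -/
/-- In a space with a 1-unconditional basis satisfying property (P), a
contraction whose image of `e_k` has `k`-th coordinate `1` must fix `e_k`. -/
theorem stmt9 {X : Type*} [NormedAddCommGroup X] [NormedSpace ℝ X] [CompleteSpace X]
    {ι : Type*} [DecidableEq ι] (e : ι → X) (coord : ι → X →L[ℝ] ℝ)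
    (hbior : ∀ i j, coord i (e j) = if i = j then 1 else 0)
    (hnorme : ∀ i, ‖e i‖ = 1)
    (hsep : ∀ x : X, (∀ i, coord i x = 0) → x = 0)
    (huncond : ∀ σ : ι → ℝ, (∀ i, σ i = 1 ∨ σ i = -1) →
      ∃ D : X ≃ₗᵢ[ℝ] X, ∀ (x : X) (i : ι), coord i (D x) = σ i * coord i x)
    (hPprop : ∀ i j : ι, i ≠ j → ∀ ε : ℝ, 0 < ε → 1 < ‖e i + ε • e j‖)
    (P : X →L[ℝ] X) (hPle : ‖P‖ ≤ 1)
    (k : ι) (hk : coord k (P (e k)) = 1) :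
    P (e k) = e k := by
  have hynorm : ‖P (e k)‖ ≤ 1 := by
    calc ‖P (e k)‖ ≤ ‖P‖ * ‖e k‖ := P.le_opNorm _
    _ ≤ 1 := by rw [hnorme]; simpa using hPle
  set y := P (e k) with hy_def
  -- Show all other coordinates of y vanish
  have hcoord0 : ∀ j, j ≠ k → coord j y = 0 := by
    intro j hjk
    by_contra hc
    set c := coord j y with hc_def
    -- a general lemma identifying vectors supported on {k, j}
    have key : ∀ (d : ℝ) (w : X),
        (∀ i, coord i w = if i = k then 1 else if i = j then d else 0) →
        w = e k + d • e j := by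
      intro d w hw
      apply sub_eq_zero.mp
      apply hsep
      intro i
      rw [map_sub, map_add, map_smul, hbior, hbior, hw i, smul_eq_mul]
      rcases eq_or_ne i k with hik | hik
      · have hij : i ≠ j := fun h => hjk (h ▸ hik)
        simp only [if_pos hik, if_neg hij]; ring
      · rcases eq_or_ne i j with hij | hij
        · simp only [if_neg hik, if_pos hij]; ring
        · simp only [if_neg hik, if_neg hij]; ring
    -- sign vector: +1 on k and j, -1 elsewhere
    set σ : ι → ℝ := fun i => if i = k then 1 else if i = j then 1 else -1 with hσ
    obtain ⟨D, hD⟩ := huncond σ (by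
      intro i
      by_cases h1 : i = k <;> by_cases h2 : i = j <;> simp [hσ, h1, h2])
    set z : X := (1/2 : ℝ) • (y + D y) with hz_def
    have hzcoord : ∀ i, coord i z = if i = k then 1 else if i = j then c else 0 := by
      intro i
      have h0 : coord i z = (1/2 : ℝ) * (coord i y + σ i * coord i y) := by
        simp only [hz_def, map_smul, map_add, hD, smul_eq_mul]
      rw [h0]
      rcases eq_or_ne i k with hik | hik
      · have hs : σ i = 1 := by simp [hσ, hik]
        have hcy : coord i y = 1 := by rw [hik]; exact hk
        simp only [if_pos hik, hs, hcy]; norm_num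
      · rcases eq_or_ne i j with hij | hij
        · have hs : σ i = 1 := by simp [hσ, hik, hij]
          have hcy : coord i y = c := by rw [hij]
          simp only [if_neg hik, if_pos hij, hs, hcy]; ring
        · have hs : σ i = -1 := by simp [hσ, hik, hij]
          simp only [if_neg hik, if_neg hij, hs]; ring
    have hzeq : z = e k + c • e j := key c z hzcoord
    have hznorm : ‖z‖ ≤ 1 := by
      calc ‖z‖ ≤ (1/2 : ℝ) * (‖y‖ + ‖D y‖) := by
            rw [hz_def, norm_smul]
            have := norm_add_le y (D y)
            have h05 : ‖(1/2 : ℝ)‖ = 1/2 := by norm_num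
            rw [h05]; nlinarith
        _ ≤ 1 := by rw [D.norm_map]; linarith
    rcases lt_trichotomy c 0 with hlt | heq | hgt
    · -- flip sign on j
      set τ : ι → ℝ := fun i => if i = j then -1 else 1 with hτ
      obtain ⟨E, hE⟩ := huncond τ (by intro i; by_cases h : i = j <;> simp [hτ, h])
      have hEz : E z = e k + (-c) • e j := by
        apply key
        intro i
        rw [hE, hzcoord i]
        rcases eq_or_ne i k with hik | hik
        · have hij : i ≠ j := fun h => hjk (h ▸ hik)
          have ht : τ i = 1 := by simp [hτ, hij]
          simp only [if_pos hik, ht]; ring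
        · rcases eq_or_ne i j with hij | hij
          · have ht : τ i = -1 := by simp [hτ, hij]
            simp only [if_neg hik, if_pos hij, ht]; ring
          · have ht : τ i = 1 := by simp [hτ, hij]
            simp only [if_neg hik, if_neg hij, ht]; ring
      have h2 : 1 < ‖e k + (-c) • e j‖ := hPprop k j (Ne.symm hjk) (-c) (by linarith)
      rw [← hEz, E.norm_map] at h2
      linarith
    · exact hc heq
    · have h2 : 1 < ‖e k + c • e j‖ := hPprop k j (Ne.symm hjk) c hgt
      rw [← hzeq] at h2
      linarith
  -- conclude
  apply sub_eq_zero.mp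
  apply hsep
  intro i
  rw [map_sub, hbior]
  rcases eq_or_ne i k with hik | hik
  · rw [hik, hk, if_pos rfl]; ring
  · rw [hcoord0 i hik, if_neg hik]; ring
end

section
/- Let ℓ_{w,p} be a strictly monotone Lorentz sequence space (1 < p < ∞, w_k > 0 for all k). Suppose Y = ker f is the range of a norm-one projection on ℓ_{w,p} where f = f_i e_i* + f_j e_j* with i ≠ j and f_i, f_j ≠ 0. Then either |f_i| = |f_j|, or w_k = 1 for all k (i.e., ℓ_{w,p} = ℓ_p isometrically). -/
/-!
Let `f(x) = fᵢ xᵢ + fⱼ xⱼ`, pick `x₀` with `f(x₀) = 1` and put `z = x₀ - P x₀`. Then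
`P (v + t z) = v` for every `v ∈ ker f`, so contractivity of `P` makes every finitely supported
`v ∈ ker f` Birkhoff–James orthogonal to `z`. Testing with `v = M eₖ ± x₀` for large `M` shows
that `z` vanishes off `{i, j}`, because `(M + d)ᵖ - Mᵖ` grows like `M ^ (p - 1)`.

Now suppose `|fⱼ| < |fᵢ|` and `a < c`. Take a finitely supported `v ∈ ker f` with `vⱼ = -fᵢ`,
`vᵢ = fⱼ` and further entries of distinct moduli that put `vⱼ`, `vᵢ` at positions `a`, `c` of its
decreasing rearrangement. Small perturbations `v + t z` keep that order, so `t ↦ ‖v + t z‖ᵖ` is a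
smooth finite sum near `0` with a minimum at `0`; its vanishing derivative reads
`w c |fⱼ|^(p-2) fⱼ zᵢ = w a |fᵢ|^(p-2) fᵢ zⱼ`. Since `fᵢ zᵢ + fⱼ zⱼ = 1`, these relations force
every weight to equal `w 0 = 1`.
-/

open ENNReal

/-- `Σₙ wₙ (xₙ*)ᵖ` for the Lorentz space `ℓ_{w,p}`, expressed as the supremum
over injections (valid for nonincreasing nonnegative weights). -/
noncomputable def lorentzSum (w : ℕ → ℝ) (p : ℝ) (x : ℕ → ℝ) : ℝ≥0∞ :=
  ⨆ π : {g : ℕ → ℕ // Function.Injective g},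
    ∑' n, ENNReal.ofReal (w n * |x (π.1 n)| ^ p)

open Finset Filter Topology

theorem Antitone.sum_le_sum_range_card {α : Type*} [AddCommMonoid α] [PartialOrder α]
    [IsOrderedAddMonoid α] {u : ℕ → α} (hu : Antitone u) (T : Finset ℕ) :
    ∑ n ∈ T, u n ≤ ∑ n ∈ range #T, u n := by
  induction T using Finset.induction_on_max with
  | empty => simp
  | insert a T hlt ih =>
    have haT : a ∉ T := fun h => (hlt a h).false
    have hcard : #T ≤ a := by
      simpa using card_le_card fun x hx => mem_range.mpr (hlt x hx)
    rw [sum_insert haT, card_insert_of_notMem haT, sum_range_succ, add_comm]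
    exact add_le_add ih (hu hcard)

theorem ENNReal.tsum_ite_comp_le {u : ℕ → ℝ≥0∞} (hu : Antitone u) {π : ℕ → ℕ}
    (hπ : Function.Injective π) (m : ℕ) :
    ∑' n, (if π n ≤ m then u n else 0) ≤ ∑' n, if n ≤ m then u n else 0 := by
  set T := (range (m + 1)).preimage π hπ.injOn
  have hT : #T ≤ m + 1 := by
    simpa using card_le_card_of_injOn (t := range (m + 1)) π (fun n hn => mem_preimage.mp hn)
      hπ.injOn
  rw [tsum_eq_sum (s := T) (by intro n hn; simp_all [T]),
    tsum_eq_sum (s := range (m + 1)) (by intro n hn; simp_all)]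
  calc ∑ n ∈ T, (if π n ≤ m then u n else 0) = ∑ n ∈ T, u n :=
        sum_congr rfl fun n hn => by simp_all [T]
    _ ≤ ∑ n ∈ range (m + 1), u n :=
        (hu.sum_le_sum_range_card T).trans (sum_le_sum_of_subset (range_subset_range.mpr hT))
    _ = _ := sum_congr rfl fun n hn => by simp_all

theorem ENNReal.tsum_mul_comp_le_tsum_mul {u b : ℕ → ℝ≥0∞} (hu : Antitone u) (hb : Antitone b)
    {M : ℕ} (hbM : b M = 0) {π : ℕ → ℕ} (hπ : Function.Injective π) :
    ∑' n, u n * b (π n) ≤ ∑' n, u n * b n := by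
  induction M generalizing b with
  | zero =>
    have : ∀ n, b n = 0 := fun n => nonpos_iff_eq_zero.mp (hbM ▸ hb (Nat.zero_le n))
    simp [this]
  | succ M ih =>
    set c := b M
    -- peel off the bottom layer `c • 1_{[0, M]}` of `b`
    have hsplit : ∀ n, b n = (b n - c) + if n ≤ M then c else 0 := by
      intro n
      split_ifs with h
      · exact (tsub_add_cancel_of_le (hb h)).symm
      · have : b n = 0 := nonpos_iff_eq_zero.mp (hbM ▸ hb (by omega))
        simp [this]
    have hlayer : ∀ σ : ℕ → ℕ, ∑' n, u n * b (σ n) =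
        ∑' n, u n * (b (σ n) - c) + c * ∑' n, if σ n ≤ M then u n else 0 := by
      intro σ
      rw [← ENNReal.tsum_mul_left, ← ENNReal.tsum_add]
      refine tsum_congr fun n => ?_
      conv_lhs => rw [hsplit (σ n)]
      split_ifs <;> simp [mul_add, mul_comm]
    rw [hlayer π, show ∑' n, u n * b n = ∑' n, u n * b (id n) from rfl, hlayer id]
    exact add_le_add (ih (fun m n h => tsub_le_tsub_right (hb h) c) (tsub_self c))
      (mul_le_mul_right (tsum_ite_comp_le hu hπ M) c)

theorem Equiv.Perm.exists_apply_eq_and_apply_eq {α : Type*} [DecidableEq α] {a c i j : α}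
    (hac : a ≠ c) (hij : i ≠ j) : ∃ e : Equiv.Perm α, e a = j ∧ e c = i := by
  refine ⟨(Equiv.swap a j).trans (Equiv.swap (Equiv.swap a j c) i), ?_, ?_⟩ <;>
    simp only [Equiv.trans_apply, Equiv.swap_apply_def] <;> split_ifs <;> grind

theorem nonpos_of_forall_abs_add_rpow_le {p d C : ℝ} (hp : 1 < p)
    (h : ∀ M : ℝ, 0 ≤ M → |M + d| ^ p ≤ M ^ p + C) : d ≤ 0 := by
  by_contra! hd
  have hslope : ∀ M : ℝ, 0 < M → p * d * M ^ (p - 1) ≤ C := by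
    intro M hM
    have hbern : 1 + p * (d / M) ≤ (1 + d / M) ^ p :=
      one_add_mul_self_le_rpow_one_add (by have := div_pos hd hM; linarith) hp.le
    have hMd : (M + d) ^ p = M ^ p * (1 + d / M) ^ p := by
      rw [← Real.mul_rpow hM.le (by positivity)]
      congr 1
      field_simp
    have hbound := h M hM.le
    rw [abs_of_pos (by linarith)] at hbound
    calc p * d * M ^ (p - 1) = M ^ p * (p * (d / M)) := by
          rw [Real.rpow_sub_one hM.ne']
          field_simp
      _ ≤ M ^ p * ((1 + d / M) ^ p - 1) := by gcongr; linarith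
      _ = (M + d) ^ p - M ^ p := by rw [hMd]; ring
      _ ≤ C := by linarith
  have htend : Tendsto (fun M : ℝ => p * d * M ^ (p - 1)) atTop atTop :=
    (tendsto_rpow_atTop (by linarith)).const_mul_atTop (by positivity)
  obtain ⟨M, hMC, hM⟩ := ((htend.eventually_gt_atTop C).and (eventually_gt_atTop 0)).exists
  exact (hslope M hM).not_gt hMC

theorem exists_abs_strictAnti_of_abs_lt {a c : ℕ} (hac : a < c) {u v : ℝ} (huv : |v| < |u|) :
    ∃ y : ℕ → ℝ, y a = u ∧ y c = v ∧ (∀ n, n < c → |y (n + 1)| < |y n|) ∧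
      ∀ n, c < n → y n = 0 := by
  have hca : (0 : ℝ) < c - a := by simp [hac]
  -- the moduli interpolate linearly between `|u|` at `a` and `|v|` at `c`
  set φ : ℕ → ℝ := fun n => |u| - (|u| - |v|) / (c - a) * (n - a)
  have hφ : StrictAnti φ := fun m n h => by
    have : (m : ℝ) < n := by exact_mod_cast h
    have : 0 < (|u| - |v|) / (c - a) := div_pos (by linarith) hca
    simp only [φ]
    nlinarith
  have hφc : φ c = |v| := by
    simp only [φ]
    field_simp
    ring
  set y : ℕ → ℝ := fun n =>
    if n = a then u else if n = c then v else if n ≤ c then φ n else 0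
  have habs : ∀ n, |y n| = if n ≤ c then φ n else 0 := by
    intro n
    by_cases hna : n = a
    · simp [y, φ, hna, hac.le]
    by_cases hnc : n = c
    · simp [y, hnc, hφc, hac.ne']
    by_cases hn : n ≤ c
    · simp only [y, if_neg hna, if_neg hnc, if_pos hn]
      exact abs_of_nonneg ((abs_nonneg v).trans (hφc ▸ hφ.antitone hn))
    · simp [y, hna, hnc, hn]
  refine ⟨y, by simp [y], by simp [y, hac.ne'], fun n hn => ?_, fun n hn => ?_⟩
  · rw [habs, habs, if_pos (by omega), if_pos (by omega)]
    exact hφ (Nat.lt_succ_self n)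
  · simp only [y]
    split_ifs <;> first | omega | rfl

theorem eventually_antitone_abs_add_mul {M : ℕ} {y z : ℕ → ℝ}
    (hy : ∀ n, n + 1 < M → |y (n + 1)| < |y n|) (hyM : ∀ n, M ≤ n → y n = 0)
    (hzM : ∀ n, M ≤ n → z n = 0) :
    ∀ᶠ t in 𝓝 (0 : ℝ), Antitone (fun n => |y n + t * z n|) := by
  have htail : ∀ t n, M ≤ n + 1 → |y (n + 1) + t * z (n + 1)| ≤ |y n + t * z n| :=
    fun t n hn => by simp [hyM _ hn, hzM _ hn]
  have hstep : ∀ n ∈ range (M - 1),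
      ∀ᶠ t in 𝓝 (0 : ℝ), |y (n + 1) + t * z (n + 1)| < |y n + t * z n| := by
    intro n hn
    have hc : Continuous fun t => |y n + t * z n| - |y (n + 1) + t * z (n + 1)| := by
      fun_prop
    filter_upwards [hc.continuousAt.eventually (lt_mem_nhds (a := 0)
      (by simpa using sub_pos.mpr (hy n (by simp at hn; omega))))] with t ht
    linarith
  filter_upwards [(eventually_all_finset _).2 hstep] with t ht
  refine antitone_nat_of_succ_le fun n => ?_
  by_cases hn : n + 1 < M
  · exact (ht n (by simp; omega)).le
  · exact htail t n (by omega)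

section Lorentz

variable {w : ℕ → ℝ} {p : ℝ}

theorem le_lorentzSum (x : ℕ → ℝ) {π : ℕ → ℕ} (hπ : Function.Injective π) :
    ∑' n, ENNReal.ofReal (w n * |x (π n)| ^ p) ≤ lorentzSum w p x :=
  le_iSup (fun π : {g : ℕ → ℕ // Function.Injective g} =>
    ∑' n, ENNReal.ofReal (w n * |x (π.1 n)| ^ p)) ⟨π, hπ⟩

theorem lorentzSum_comp_le (x : ℕ → ℝ) {g : ℕ → ℕ} (hg : Function.Injective g) :
    lorentzSum w p (x ∘ g) ≤ lorentzSum w p x :=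
  iSup_le fun π => le_lorentzSum x (hg.comp π.2)

theorem lorentzSum_comp_perm (x : ℕ → ℝ) (e : Equiv.Perm ℕ) :
    lorentzSum w p (x ∘ e) = lorentzSum w p x := by
  refine le_antisymm (lorentzSum_comp_le x e.injective) ?_
  simpa [Function.comp_def] using lorentzSum_comp_le (w := w) (p := p) (x ∘ e) e.symm.injective

theorem ofReal_mul_rpow_le_lorentzSum (x : ℕ → ℝ) (k : ℕ) :
    ENNReal.ofReal (w 0 * |x k| ^ p) ≤ lorentzSum w p x := by
  refine le_trans ?_ (le_lorentzSum x (add_left_injective k))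
  simpa using ENNReal.le_tsum (f := fun n => ENNReal.ofReal (w n * |x (n + k)| ^ p)) 0

theorem lorentzSum_le_mul_sum (hw : Antitone w) (hp : p ≠ 0) {x : ℕ → ℝ} (S : Finset ℕ)
    (hx : ∀ k ∉ S, x k = 0) :
    lorentzSum w p x ≤ ENNReal.ofReal (w 0) * ∑ k ∈ S, ENNReal.ofReal (|x k| ^ p) := by
  refine iSup_le fun π => ?_
  calc ∑' n, ENNReal.ofReal (w n * |x (π.1 n)| ^ p)
      ≤ ∑' n, ENNReal.ofReal (w 0) * ENNReal.ofReal (|x (π.1 n)| ^ p) := by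
        gcongr with n
        rw [← ENNReal.ofReal_mul' (by positivity)]
        gcongr
        exact hw (Nat.zero_le n)
    _ ≤ ENNReal.ofReal (w 0) * ∑' k, ENNReal.ofReal (|x k| ^ p) := by
        rw [ENNReal.tsum_mul_left]
        exact mul_le_mul_right (tsum_comp_le_tsum_of_injective π.2 _) _
    _ = _ := by
        rw [tsum_eq_sum fun k hk => by simp [hx k hk, Real.zero_rpow hp]]

theorem lorentzSum_ne_top (hw : Antitone w) (hp : p ≠ 0) {x : ℕ → ℝ} (S : Finset ℕ)
    (hx : ∀ k ∉ S, x k = 0) : lorentzSum w p x ≠ ⊤ :=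
  ne_top_of_le_ne_top (by simp [ENNReal.mul_eq_top, ENNReal.sum_eq_top])
    (lorentzSum_le_mul_sum hw hp S hx)

theorem lorentzSum_eq_tsum_of_antitone (hw : Antitone w) (hw_nonneg : ∀ n, 0 ≤ w n)
    (hp : 0 < p) {x : ℕ → ℝ} (hx : Antitone fun n => |x n|) {M : ℕ} (hxM : x M = 0) :
    lorentzSum w p x = ∑' n, ENNReal.ofReal (w n * |x n| ^ p) := by
  refine le_antisymm (iSup_le fun π => ?_) (le_lorentzSum x Function.injective_id)
  simp only [ENNReal.ofReal_mul (hw_nonneg _)]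
  exact ENNReal.tsum_mul_comp_le_tsum_mul (b := fun n => ENNReal.ofReal (|x n| ^ p)) (M := M)
    (fun m n h => ENNReal.ofReal_le_ofReal (hw h))
    (fun m n h => ENNReal.ofReal_le_ofReal (Real.rpow_le_rpow (abs_nonneg _) (hx h) hp.le))
    (by simp [hxM, Real.zero_rpow hp.ne']) π.2

/-- Birkhoff–James orthogonality of `y` to `z` in `ℓ_{w,p}`. -/
def IsLorentzOrthogonal (w : ℕ → ℝ) (p : ℝ) (y z : ℕ → ℝ) : Prop :=
  ∀ t : ℝ, lorentzSum w p y ≤ lorentzSum w p (y + t • z)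

theorem IsLorentzOrthogonal.comp_perm {y z : ℕ → ℝ} (h : IsLorentzOrthogonal w p y z)
    (e : Equiv.Perm ℕ) : IsLorentzOrthogonal w p (y ∘ e) (z ∘ e) := fun t => by
  change lorentzSum w p (y ∘ e) ≤ lorentzSum w p ((y + t • z) ∘ e)
  rw [lorentzSum_comp_perm, lorentzSum_comp_perm]
  exact h t

theorem IsLorentzOrthogonal.sum_eq_zero (hw : Antitone w) (hw_nonneg : ∀ n, 0 ≤ w n)
    (hp : 1 < p) {M : ℕ} {y z : ℕ → ℝ} (hy : ∀ n, n + 1 < M → |y (n + 1)| < |y n|)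
    (hyM : ∀ n, M ≤ n → y n = 0) (hzM : ∀ n, M ≤ n → z n = 0)
    (h : IsLorentzOrthogonal w p y z) :
    ∑ n ∈ range M, w n * (|y n| ^ (p - 2) * y n * z n) = 0 := by
  set F : ℝ → ℝ := fun t => ∑ n ∈ range M, w n * |y n + t * z n| ^ p
  have hF : ∀ t, Antitone (fun n => |y n + t * z n|) →
      lorentzSum w p (y + t • z) = ENNReal.ofReal (F t) := by
    intro t ht
    change lorentzSum w p (fun n => y n + t * z n) = _
    rw [lorentzSum_eq_tsum_of_antitone hw hw_nonneg (by linarith) ht (M := M)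
        (by simp [hyM, hzM]),
      tsum_eq_sum (s := range M) (fun n hn => by simp_all [Real.zero_rpow (by linarith : p ≠ 0)]),
      ENNReal.ofReal_sum_of_nonneg (fun n _ => by have := hw_nonneg n; positivity)]
  have hsorted := eventually_antitone_abs_add_mul hy hyM hzM
  have hmin : IsLocalMin F 0 := by
    filter_upwards [hsorted] with t ht
    have h0 := hF 0 hsorted.self_of_nhds
    rw [zero_smul, add_zero] at h0
    have := h t
    rw [h0, hF t ht] at this
    have hFt : 0 ≤ F t := sum_nonneg fun n _ => by have := hw_nonneg n; positivity
    exact (ENNReal.ofReal_le_ofReal_iff hFt).1 this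
  have hderiv : HasDerivAt F
      (∑ n ∈ range M, w n * (p * |y n| ^ (p - 2) * y n * z n)) 0 := by
    refine HasDerivAt.fun_sum fun n _ => ?_
    have := (hasDerivAt_abs_rpow (y n) hp).comp_of_eq (0 : ℝ)
      (((hasDerivAt_id (0 : ℝ)).mul_const (z n)).const_add (y n)) (by simp)
    simpa using this.const_mul (w n)
  have := hmin.hasDerivAt_eq_zero hderiv
  simp only [mul_assoc, ← mul_left_comm p, ← Finset.mul_sum] at this ⊢
  exact (mul_eq_zero.mp this).resolve_left (by linarith)

theorem abs_add_rpow_le_of_projection (hp : p ≠ 0) (hw : Antitone w) (hw0 : w 0 = 1)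
    {i j k : ℕ} (hki : k ≠ i) (hkj : k ≠ j) {fi fj c : ℝ} (P : (ℕ → ℝ) →ₗ[ℝ] (ℕ → ℝ))
    (hfix : ∀ x : ℕ → ℝ, lorentzSum w p x ≠ ⊤ → fi * x i + fj * x j = 0 → P x = x)
    (hcontr : ∀ x, lorentzSum w p (P x) ≤ lorentzSum w p x) {z : ℕ → ℝ}
    (hz : P (Pi.single i c) = Pi.single i c - z) (σ M : ℝ) (hM : 0 ≤ M) :
    |M + -(σ * z k)| ^ p ≤ M ^ p + |σ * c| ^ p := by
  set x := Pi.single k M + σ • Pi.single i c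
  have hek : P (Pi.single k M) = Pi.single k M :=
    hfix _ (lorentzSum_ne_top hw hp {k} fun n hn => by simp_all)
      (by simp [hki.symm, hkj.symm])
  have hPx : P x = x - σ • z := by
    rw [map_add, map_smul, hek, hz]
    simp only [x, smul_sub]
    abel
  have hchain := ((ofReal_mul_rpow_le_lorentzSum (P x) k).trans (hcontr x)).trans
    (lorentzSum_le_mul_sum hw hp {k, i} (x := x) fun n hn => by simp_all [x])
  rw [sum_pair hki, hPx, hw0] at hchain
  simp [x, hki, hki.symm, abs_of_nonneg hM, sub_eq_add_neg] at hchain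
  rw [← ENNReal.ofReal_add (by positivity) (by positivity),
    ENNReal.ofReal_le_ofReal_iff (by positivity)] at hchain
  simpa using hchain

theorem exists_isLorentzOrthogonal_of_projection (hp : 1 < p) (hw : Antitone w) (hw0 : w 0 = 1)
    {i j : ℕ} (hij : i ≠ j) {fi fj : ℝ} (hfi : fi ≠ 0) (P : (ℕ → ℝ) →ₗ[ℝ] (ℕ → ℝ))
    (hinto : ∀ x : ℕ → ℝ, lorentzSum w p x ≠ ⊤ → fi * P x i + fj * P x j = 0)
    (hfix : ∀ x : ℕ → ℝ, lorentzSum w p x ≠ ⊤ → fi * x i + fj * x j = 0 → P x = x)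
    (hcontr : ∀ x, lorentzSum w p (P x) ≤ lorentzSum w p x) :
    ∃ z : ℕ → ℝ, fi * z i + fj * z j = 1 ∧ (∀ k, k ≠ i → k ≠ j → z k = 0) ∧
      ∀ v, lorentzSum w p v ≠ ⊤ → fi * v i + fj * v j = 0 → IsLorentzOrthogonal w p v z := by
  have hp0 : p ≠ 0 := by linarith
  set x₀ : ℕ → ℝ := Pi.single i fi⁻¹
  have hx₀ : lorentzSum w p x₀ ≠ ⊤ :=
    lorentzSum_ne_top hw hp0 {i} fun k hk => by simp_all [x₀]
  set z := x₀ - P x₀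
  have hfz : fi * z i + fj * z j = 1 := by
    have hx₀i : x₀ i = fi⁻¹ := Pi.single_eq_same i _
    have hx₀j : x₀ j = 0 := Pi.single_eq_of_ne hij.symm _
    simp only [z, Pi.sub_apply, hx₀i, hx₀j]
    linear_combination mul_inv_cancel₀ hfi - hinto x₀ hx₀
  have hPz : P z = 0 := by
    rw [map_sub, hfix _ (ne_top_of_le_ne_top hx₀ (hcontr x₀)) (hinto x₀ hx₀), sub_self]
  have horth : ∀ v, lorentzSum w p v ≠ ⊤ → fi * v i + fj * v j = 0 →
      IsLorentzOrthogonal w p v z := by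
    intro v hv hker t
    have hP : P (v + t • z) = v := by
      rw [map_add, map_smul, hPz, smul_zero, add_zero, hfix v hv hker]
    simpa [hP] using hcontr (v + t • z)
  refine ⟨z, hfz, fun k hki hkj => ?_, horth⟩
  have hgrowth := abs_add_rpow_le_of_projection hp0 hw hw0 hki hkj P hfix hcontr
    (sub_sub_cancel x₀ (P x₀)).symm
  have h₁ := nonpos_of_forall_abs_add_rpow_le hp (hgrowth 1)
  have h₂ := nonpos_of_forall_abs_add_rpow_le hp (hgrowth (-1))
  linarith

theorem weight_mul_eq_of_forall_isLorentzOrthogonal (hp : 1 < p) (hw : Antitone w)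
    (hw_nonneg : ∀ n, 0 ≤ w n) {i j : ℕ} (hij : i ≠ j) {fi fj : ℝ} (hlt : |fj| < |fi|)
    {z : ℕ → ℝ} (hz : ∀ k, k ≠ i → k ≠ j → z k = 0)
    (horth : ∀ v, lorentzSum w p v ≠ ⊤ → fi * v i + fj * v j = 0 → IsLorentzOrthogonal w p v z)
    {a c : ℕ} (hac : a < c) :
    w c * (|fj| ^ (p - 2) * fj * z i) = w a * (|fi| ^ (p - 2) * fi * z j) := by
  obtain ⟨y, hya, hyc, hy, hyM⟩ :=
    exists_abs_strictAnti_of_abs_lt hac (u := -fi) (v := fj) (by rwa [abs_neg])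
  obtain ⟨e, hea, hec⟩ := Equiv.Perm.exists_apply_eq_and_apply_eq hac.ne hij
  have hze : ∀ n, n ≠ a → n ≠ c → z (e n) = 0 := fun n hna hnc =>
    hz _ (fun h => hnc (e.injective (h.trans hec.symm)))
      (fun h => hna (e.injective (h.trans hea.symm)))
  -- `y` is the decreasing rearrangement of the test vector `y ∘ e.symm`
  have hye : (y ∘ e.symm) ∘ e = y := by ext; simp
  have hfin : lorentzSum w p (y ∘ e.symm) ≠ ⊤ := by
    rw [← lorentzSum_comp_perm _ e, hye]
    exact lorentzSum_ne_top hw (by linarith) (range (c + 1))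
      fun n hn => hyM n (by simp at hn; omega)
  have hker : fi * (y ∘ e.symm) i + fj * (y ∘ e.symm) j = 0 := by
    simp only [Function.comp_apply, e.symm_apply_eq.mpr hec.symm, e.symm_apply_eq.mpr hea.symm,
      hya, hyc]
    ring
  have hsum := (hye ▸ (horth _ hfin hker).comp_perm e).sum_eq_zero hw hw_nonneg hp
    (M := c + 1) (fun n hn => hy n (by omega)) (fun n hn => hyM n (by omega))
    (fun n hn => hze n (by omega) (by omega))
  rw [sum_eq_add_of_mem a c (by simp; omega) (by simp) hac.ne fun n _ hn => by
    simp [hze n hn.1 hn.2]] at hsum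
  simp only [hya, hyc, hea, hec, abs_neg] at hsum
  linarith

theorem forall_weight_eq_one_of_isLorentzOrthogonal (hp : 1 < p) (hw : Antitone w)
    (hw0 : w 0 = 1) (hpos : ∀ n, 0 < w n) {i j : ℕ} (hij : i ≠ j) {fi fj : ℝ} (hfi : fi ≠ 0)
    (hfj : fj ≠ 0) (hlt : |fj| < |fi|) {z : ℕ → ℝ} (hfz : fi * z i + fj * z j = 1)
    (hz : ∀ k, k ≠ i → k ≠ j → z k = 0)
    (horth : ∀ v, lorentzSum w p v ≠ ⊤ → fi * v i + fj * v j = 0 → IsLorentzOrthogonal w p v z) :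
    ∀ k, w k = 1 := by
  set X := |fj| ^ (p - 2) * fj * z i
  set Y := |fi| ^ (p - 2) * fi * z j
  have key : ∀ a c, a < c → w c * X = w a * Y := fun a c hac =>
    weight_mul_eq_of_forall_isLorentzOrthogonal hp hw (fun n => (hpos n).le) hij hlt hz horth hac
  have hX : X ≠ 0 := by
    intro hX
    have hY : Y = 0 := by simpa [hX, hw0] using (key 0 1 zero_lt_one).symm
    have hzi : z i = 0 := by simpa [X, hfj, (Real.rpow_pos_of_pos (abs_pos.2 hfj) _).ne'] using hX
    have hzj : z j = 0 := by simpa [Y, hfi, (Real.rpow_pos_of_pos (abs_pos.2 hfi) _).ne'] using hY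
    simp [hzi, hzj] at hfz
  have hsucc : ∀ b, w (b + 1) * X = Y := fun b => by simpa [hw0] using key 0 (b + 1) b.succ_pos
  have hw1 : w 1 = 1 := by
    have h := key 1 2 one_lt_two
    rw [hsucc 1, ← hsucc 0] at h
    have := mul_right_cancel₀ hX (h.trans (mul_assoc _ _ _).symm)
    nlinarith [hpos 1]
  intro k
  cases k with
  | zero => exact hw0
  | succ b => exact mul_right_cancel₀ hX ((hsucc b).trans (by rw [← hsucc 0, hw1]))

end Lorentz

/-- In a strictly monotone Lorentz space, if `ker(fᵢ eᵢ* + fⱼ eⱼ*)` is the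
range of a norm-one projection, then `|fᵢ| = |fⱼ|` or all weights equal `1`. -/
theorem stmt13 (p : ℝ) (hp : 1 < p)
    (w : ℕ → ℝ) (hmono : Antitone w) (hw0 : w 0 = 1) (hpos : ∀ n, 0 < w n)
    (i j : ℕ) (hij : i ≠ j) (fi fj : ℝ) (hfi : fi ≠ 0) (hfj : fj ≠ 0)
    (P : (ℕ → ℝ) →ₗ[ℝ] (ℕ → ℝ))
    (hinto : ∀ x : ℕ → ℝ, lorentzSum w p x ≠ ⊤ → fi * P x i + fj * P x j = 0)
    (hfix : ∀ x : ℕ → ℝ, lorentzSum w p x ≠ ⊤ → fi * x i + fj * x j = 0 → P x = x)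
    (hcontr : ∀ x, lorentzSum w p (P x) ≤ lorentzSum w p x) :
    |fi| = |fj| ∨ ∀ k, w k = 1 := by
  obtain ⟨z, hfz, hz, horth⟩ :=
    exists_isLorentzOrthogonal_of_projection hp hmono hw0 hij hfi P hinto hfix hcontr
  rcases lt_trichotomy |fi| |fj| with h | h | h
  · exact Or.inr <| forall_weight_eq_one_of_isLorentzOrthogonal hp hmono hw0 hpos hij.symm hfj
      hfi h (by linarith) (fun k hkj hki => hz k hki hkj)
      (fun v hv hker => horth v hv (by linarith))
  · exact Or.inl h
  · exact Or.inr <| forall_weight_eq_one_of_isLorentzOrthogonal hp hmono hw0 hpos hij hfi hfj h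
      hfz hz horth
end

section
/- Let ℓ_φ be an Orlicz sequence space with Luxemburg norm where φ is an Orlicz function with φ'(0) = 0 (right derivative at 0 is zero). Then ℓ_φ has property (Q): for all basis indices i ≠ j, lim_{ε→0⁺} (‖e_i + ε e_j‖_φ − 1)/ε = 0. -/
open Filter

noncomputable def luxNormSeq (φ : ℝ → ℝ) (x : ℕ → ℝ) : ℝ :=
  sInf {l : ℝ | 0 < l ∧ ∑' n, φ (|x n| / l) ≤ 1}

/-! For `λ > 0` the modular of `eᵢ + ε eⱼ` at `λ` is `φ (1/λ) + φ (ε/λ)`. Convexity with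
`φ 0 = 0`, `φ 1 = 1` gives `φ t ≤ t` on `[0, 1]` and `t ≤ φ t` on `[1, ∞)`. The latter forces
`1 ≤ ‖eᵢ + ε eⱼ‖`, the former makes `λ = (1 - φ ε)⁻¹` admissible, so
`0 ≤ (‖eᵢ + ε eⱼ‖ - 1) / ε ≤ (φ ε / ε) / (1 - φ ε)`, which tends to `0` since `φ'(0) = 0`. -/

open Set Topology

section Orlicz

variable {φ : ℝ → ℝ}

theorem ConvexOn.map_mul_le_mul_of_map_zero (hconv : ConvexOn ℝ (Ici 0) φ)
    (h0 : φ 0 = 0) {s x : ℝ} (hs₀ : 0 ≤ s) (hs₁ : s ≤ 1) (hx : 0 ≤ x) :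
    φ (s * x) ≤ s * φ x := by
  simpa [h0] using hconv.2 (self_mem_Ici : (0 : ℝ) ∈ Ici 0) (mem_Ici.2 hx) (sub_nonneg.2 hs₁) hs₀
    (by ring)

theorem ConvexOn.map_le_self (hconv : ConvexOn ℝ (Ici 0) φ) (h0 : φ 0 = 0) (h1 : φ 1 = 1) {t : ℝ}
    (ht₀ : 0 ≤ t) (ht₁ : t ≤ 1) : φ t ≤ t := by
  simpa [h1] using hconv.map_mul_le_mul_of_map_zero h0 ht₀ ht₁ zero_le_one

theorem ConvexOn.self_le_map (hconv : ConvexOn ℝ (Ici 0) φ) (h0 : φ 0 = 0) (h1 : φ 1 = 1) {t : ℝ}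
    (ht : 1 ≤ t) : t ≤ φ t := by
  have ht₀ : 0 < t := one_pos.trans_le ht
  have := hconv.map_mul_le_mul_of_map_zero h0 (inv_nonneg.2 ht₀.le) (inv_le_one_of_one_le₀ ht)
    ht₀.le
  rwa [inv_mul_cancel₀ ht₀.ne', h1, inv_mul_eq_div, le_div_iff₀ ht₀, one_mul] at this

theorem MonotoneOn.map_nonneg (hmono : MonotoneOn φ (Ici 0)) (h0 : φ 0 = 0) {t : ℝ} (ht : 0 ≤ t) :
    0 ≤ φ t :=
  h0 ▸ hmono self_mem_Ici ht ht

theorem luxNormSeq_le {x : ℕ → ℝ} {l : ℝ} (hl : 0 < l) (hsum : ∑' n, φ (|x n| / l) ≤ 1) :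
    luxNormSeq φ x ≤ l :=
  csInf_le ⟨0, fun _ hm => hm.1.le⟩ ⟨hl, hsum⟩

theorem le_luxNormSeq {x : ℕ → ℝ} {c : ℝ} (hne : ∃ l > 0, ∑' n, φ (|x n| / l) ≤ 1)
    (h : ∀ l > 0, ∑' n, φ (|x n| / l) ≤ 1 → c ≤ l) : c ≤ luxNormSeq φ x :=
  le_csInf hne fun l hl => h l hl.1 hl.2

theorem tsum_single_add_single (h0 : φ 0 = 0) {i j : ℕ} (hij : i ≠ j) (a b l : ℝ) :
    ∑' n, φ (|(Pi.single i a + Pi.single j b : ℕ → ℝ) n| / l) = φ (|a| / l) + φ (|b| / l) := by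
  rw [tsum_eq_sum (s := {i, j}), Finset.sum_pair hij]
  · simp [Pi.single_eq_of_ne hij, Pi.single_eq_of_ne hij.symm]
  · intro n hn
    simp only [Finset.mem_insert, Finset.mem_singleton, not_or] at hn
    simp [Pi.single_eq_of_ne hn.1, Pi.single_eq_of_ne hn.2, h0]

theorem tsum_single_add_single_div_inv_one_sub_le_one (hconv : ConvexOn ℝ (Ici 0) φ)
    (hmono : MonotoneOn φ (Ici 0)) (h0 : φ 0 = 0) (h1 : φ 1 = 1) {i j : ℕ} (hij : i ≠ j)
    {b : ℝ} (hb : 0 ≤ b) (hφb : φ b < 1) :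
    ∑' n, φ (|(Pi.single i 1 + Pi.single j b : ℕ → ℝ) n| / (1 - φ b)⁻¹) ≤ 1 := by
  have hφb₀ : 0 ≤ φ b := hmono.map_nonneg h0 hb
  rw [tsum_single_add_single h0 hij, abs_one, abs_of_nonneg hb, div_inv_eq_mul, div_inv_eq_mul,
    one_mul]
  have hfirst : φ (1 - φ b) ≤ 1 - φ b := hconv.map_le_self h0 h1 (by linarith) (by linarith)
  have hsecond : φ (b * (1 - φ b)) ≤ φ b :=
    hmono (mem_Ici.2 (by nlinarith)) (mem_Ici.2 hb) (by nlinarith)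
  linarith

theorem luxNormSeq_single_add_single_le (hconv : ConvexOn ℝ (Ici 0) φ)
    (hmono : MonotoneOn φ (Ici 0)) (h0 : φ 0 = 0) (h1 : φ 1 = 1) {i j : ℕ} (hij : i ≠ j)
    {b : ℝ} (hb : 0 ≤ b) (hφb : φ b < 1) :
    luxNormSeq φ (Pi.single i 1 + Pi.single j b) ≤ (1 - φ b)⁻¹ :=
  luxNormSeq_le (inv_pos.2 (sub_pos.2 hφb))
    (tsum_single_add_single_div_inv_one_sub_le_one hconv hmono h0 h1 hij hb hφb)

theorem one_le_luxNormSeq_single_add_single (hconv : ConvexOn ℝ (Ici 0) φ)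
    (hmono : MonotoneOn φ (Ici 0)) (h0 : φ 0 = 0) (h1 : φ 1 = 1) {i j : ℕ} (hij : i ≠ j)
    {b : ℝ} (hb : 0 ≤ b) (hφb : φ b < 1) :
    1 ≤ luxNormSeq φ (Pi.single i 1 + Pi.single j b) := by
  refine le_luxNormSeq ⟨_, inv_pos.2 (sub_pos.2 hφb),
    tsum_single_add_single_div_inv_one_sub_le_one hconv hmono h0 h1 hij hb hφb⟩ fun l hl hsum => ?_
  rw [tsum_single_add_single h0 hij, abs_one] at hsum
  by_contra! hl₁
  have hfirst : 1 / l ≤ φ (1 / l) := hconv.self_le_map h0 h1 (by rw [le_div_iff₀ hl]; linarith)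
  have hsecond : 0 ≤ φ (|b| / l) := hmono.map_nonneg h0 (by positivity)
  have : 1 < 1 / l := by rw [lt_div_iff₀ hl]; linarith
  linarith

theorem tendsto_div_self_nhdsGT_of_hasDerivWithinAt (h0 : φ 0 = 0)
    (hder : HasDerivWithinAt φ 0 (Ici 0) 0) :
    Tendsto (fun ε ↦ φ ε / ε) (𝓝[>] 0) (𝓝 0) := by
  have := (hasDerivWithinAt_iff_tendsto_slope' (lt_irrefl 0)).1
    (hasDerivWithinAt_Ioi_iff_Ici.2 hder)
  exact this.congr fun ε ↦ by simp [slope_def_field, h0]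

end Orlicz

/-- If the Orlicz function `φ` has right derivative `0` at `0`, then `ℓ_φ`
with the Luxemburg norm has property (Q). -/
theorem stmt16 (φ : ℝ → ℝ) (hconv : ConvexOn ℝ (Set.Ici 0) φ)
    (hmono : MonotoneOn φ (Set.Ici 0)) (h0 : φ 0 = 0) (h1 : φ 1 = 1)
    (hder : HasDerivWithinAt φ 0 (Set.Ici (0 : ℝ)) 0) :
    ∀ i j : ℕ, i ≠ j →
      Tendsto (fun ε : ℝ =>
          (luxNormSeq φ (((Pi.single i 1 : ℕ → ℝ) + ε • (Pi.single j 1 : ℕ → ℝ))) - 1) / ε)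
        (nhdsWithin 0 (Set.Ioi 0)) (nhds 0) := by
  intro i j hij
  have hslope := tendsto_div_self_nhdsGT_of_hasDerivWithinAt h0 hder
  have hφ : Tendsto φ (𝓝[>] 0) (𝓝 0) := by
    simpa [h0] using (hder.continuousWithinAt.mono Ioi_subset_Ici_self).tendsto
  have hbound : Tendsto (fun ε ↦ φ ε / ε / (1 - φ ε)) (𝓝[>] 0) (𝓝 0) := by
    have := hslope.div ((tendsto_const_nhds (x := (1 : ℝ))).sub hφ) (by norm_num)
    rwa [sub_zero, div_one] at this
  refine tendsto_of_tendsto_of_tendsto_of_le_of_le' tendsto_const_nhds hbound ?_ ?_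
  all_goals
    filter_upwards [self_mem_nhdsWithin, hφ.eventually (eventually_lt_nhds one_pos)]
      with ε (hε : 0 < ε) hφε
    rw [← Pi.single_smul', smul_eq_mul, mul_one]
  · exact div_nonneg
      (sub_nonneg.2 (one_le_luxNormSeq_single_add_single hconv hmono h0 h1 hij hε.le hφε)) hε.le
  · calc _ ≤ ((1 - φ ε)⁻¹ - 1) / ε := by
          gcongr
          exact luxNormSeq_single_add_single_le hconv hmono h0 h1 hij hε.le hφε
      _ = φ ε / ε / (1 - φ ε) := by
          field_simp [(sub_pos.2 hφε).ne']
          ring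
end
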